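/- arXiv:1812.07488 — 3 statements merged into one kernel-verified Lean document; each statement's English description precedes it below -/
import Mathlib

section
/- Let φ denote the standard Gaussian density and φ^{(l)} its l-th derivative. For every real X, every s > 0, every σ > 0, and every natural number l, the convolution identity ∫_ℝ (1/σ)·φ(θ/σ) · (1/s)·φ^{(l)}((X − θ)/s) dθ = (s^l / (σ² + s²)^{(l+1)/2}) · φ^{(l)}(X / √(σ² + s²)) holds. -/
/-!
For `l = 0` the identity says that `N(0, σ²) * N(0, s²) = N(0, σ² + s²)`: completing the square in
`θ` splits the integrand into `φ` at `X / √(σ² + s²)` times a normalized Gaussian density in `θ`.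
Differentiating in `X` under the integral sign, which is legitimate because each `φ^{(l)}` is a
Hermite polynomial times `φ` and hence bounded, raises `l` by one on both sides, at the cost of
a factor `1 / s` on the left and `1 / √(σ² + s²)` on the right.
-/

open MeasureTheory Real

/-- The standard Gaussian density `φ`. -/
noncomputable def phi (x : ℝ) : ℝ := (Real.sqrt (2 * Real.pi))⁻¹ * Real.exp (-x ^ 2 / 2)

/-- The `l`-th derivative `φ^{(l)}` of the standard Gaussian density (`φ^{(0)} = φ`). -/
noncomputable def phiD (l : ℕ) : ℝ → ℝ := iteratedDeriv l phi

open Polynomial Filter Topology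

lemma contDiff_phi : ContDiff ℝ ⊤ phi := by
  unfold phi; fun_prop

lemma hasDerivAt_phiD (l : ℕ) (x : ℝ) : HasDerivAt (phiD l) (phiD (l + 1) x) x := by
  rw [phiD, phiD, iteratedDeriv_succ]
  exact (contDiff_phi.differentiable_iteratedDeriv l (by simp) x).hasDerivAt

lemma continuous_phiD (l : ℕ) : Continuous (phiD l) :=
  (contDiff_phi.differentiable_iteratedDeriv l (by simp)).continuous

lemma phiD_eq_hermite (l : ℕ) (x : ℝ) :
    phiD l x = (√(2 * π))⁻¹ * ((-1) ^ l * aeval x (hermite l) * exp (-(x ^ 2 / 2))) := by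
  have hphi : phi = fun x => (√(2 * π))⁻¹ * exp (-(x ^ 2 / 2)) := by
    funext x; rw [phi, neg_div]
  rw [phiD, hphi, iteratedDeriv_const_mul_field, iteratedDeriv_eq_iterate,
    deriv_gaussian_eq_hermite_mul_gaussian]

lemma tendsto_pow_mul_exp_neg_sq_div_two_cocompact (n : ℕ) :
    Tendsto (fun x : ℝ => x ^ n * exp (-(x ^ 2 / 2))) (cocompact ℝ) (𝓝 0) := by
  rw [tendsto_zero_iff_abs_tendsto_zero]
  convert tendsto_rpow_abs_mul_exp_neg_mul_sq_cocompact (a := 1 / 2) (by norm_num) n using 2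
  rw [Function.comp_apply, abs_mul, abs_pow, abs_of_pos (exp_pos _), rpow_natCast]
  ring_nf

lemma tendsto_aeval_mul_exp_neg_sq_div_two_cocompact (p : ℤ[X]) :
    Tendsto (fun x : ℝ => aeval x p * exp (-(x ^ 2 / 2))) (cocompact ℝ) (𝓝 0) := by
  induction p using Polynomial.induction_on' with
  | add p q hp hq => simpa [add_mul] using hp.add hq
  | monomial n a =>
    simpa [mul_assoc] using (tendsto_pow_mul_exp_neg_sq_div_two_cocompact n).const_mul (a : ℝ)

lemma tendsto_phiD_cocompact (l : ℕ) : Tendsto (phiD l) (cocompact ℝ) (𝓝 0) := by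
  simpa [funext (phiD_eq_hermite l), mul_assoc] using
    ((tendsto_aeval_mul_exp_neg_sq_div_two_cocompact (hermite l)).const_mul ((-1) ^ l)).const_mul
      (√(2 * π))⁻¹

lemma exists_abs_phiD_le (l : ℕ) : ∃ C, ∀ x, |phiD l x| ≤ C :=
  let f : ZeroAtInftyContinuousMap ℝ ℝ := ⟨⟨phiD l, continuous_phiD l⟩, tendsto_phiD_cocompact l⟩
  ⟨‖f.toBCF‖, f.toBCF.norm_coe_le_norm⟩

lemma integral_phi : ∫ x, phi x = 1 := by
  have h : (fun x : ℝ => exp (-x ^ 2 / 2)) = fun x => exp (-(1 / 2) * x ^ 2) := by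
    funext x; ring_nf
  have h2π : π / (1 / 2) = 2 * π := by ring
  simp only [phi]
  rw [integral_const_mul, h, integral_gaussian, h2π, inv_mul_cancel₀ (by positivity)]

lemma integral_phi_sub_div (m : ℝ) {τ : ℝ} (hτ : 0 < τ) :
    ∫ θ, (1 / τ) * phi ((θ - m) / τ) = 1 := by
  rw [integral_const_mul, integral_sub_right_eq_self (fun θ => phi (θ / τ)) m,
    Measure.integral_comp_div, integral_phi, abs_of_pos hτ, smul_eq_mul]
  field_simp

lemma phi_mul_phi (X θ : ℝ) {σ s t : ℝ} (hσ : σ ≠ 0) (hs : s ≠ 0) (ht : t ≠ 0)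
    (hst : t ^ 2 = σ ^ 2 + s ^ 2) :
    (1 / σ) * phi (θ / σ) * ((1 / s) * phi ((X - θ) / s)) =
      (1 / t) * phi (X / t) *
        ((1 / (σ * s / t)) * phi ((θ - σ ^ 2 * X / t ^ 2) / (σ * s / t))) := by
  have hexp : exp (-(θ / σ) ^ 2 / 2) * exp (-((X - θ) / s) ^ 2 / 2) =
      exp (-(X / t) ^ 2 / 2) * exp (-((θ - σ ^ 2 * X / t ^ 2) / (σ * s / t)) ^ 2 / 2) := by
    rw [← exp_add, ← exp_add]
    congr 1
    simp only [div_pow, mul_pow, hst]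
    field_simp
    ring
  have regroup : ∀ a b : ℝ, 1 / σ * ((√(2 * π))⁻¹ * a) * (1 / s * ((√(2 * π))⁻¹ * b)) =
      (√(2 * π))⁻¹ ^ 2 / (σ * s) * (a * b) := fun a b => by ring
  simp only [phi]
  rw [regroup, hexp]
  field_simp

lemma integrable_phi : Integrable phi :=
  .of_integral_ne_zero (by rw [integral_phi]; exact one_ne_zero)

lemma integral_phi_mul_phi (X : ℝ) {σ s : ℝ} (hσ : 0 < σ) (hs : 0 < s) :
    ∫ θ, (1 / σ) * phi (θ / σ) * ((1 / s) * phi ((X - θ) / s)) =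
      (1 / √(σ ^ 2 + s ^ 2)) * phi (X / √(σ ^ 2 + s ^ 2)) := by
  have ht : 0 < √(σ ^ 2 + s ^ 2) := by positivity
  have hst : √(σ ^ 2 + s ^ 2) ^ 2 = σ ^ 2 + s ^ 2 := sq_sqrt (by positivity)
  simp_rw [phi_mul_phi X _ hσ.ne' hs.ne' ht.ne' hst]
  rw [integral_const_mul, integral_phi_sub_div _ (by positivity), mul_one]

lemma hasDerivAt_integral_mul_comp_sub {g f f' : ℝ → ℝ} (hg : Integrable g)
    (hf : ∀ x, HasDerivAt f (f' x) x) {C C' : ℝ} (hfC : ∀ x, |f x| ≤ C)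
    (hf'C : ∀ x, |f' x| ≤ C') (x₀ : ℝ) :
    HasDerivAt (fun x => ∫ θ, g θ * f (x - θ)) (∫ θ, g θ * f' (x₀ - θ)) x₀ := by
  have hf_cont : Continuous f := continuous_iff_continuousAt.2 fun x => (hf x).continuousAt
  have hf'_meas : Measurable f' := by
    simpa only [funext fun x => (hf x).deriv] using measurable_deriv f
  have hf_sub_meas (x : ℝ) : AEStronglyMeasurable (fun θ => f (x - θ)) :=
    (hf_cont.comp (continuous_sub_left x)).aestronglyMeasurable
  refine (hasDerivAt_integral_of_dominated_loc_of_deriv_le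
    (F' := fun x θ => g θ * f' (x - θ)) (bound := fun θ => ‖g θ‖ * C')
    univ_mem (.of_forall fun x => hg.aestronglyMeasurable.mul (hf_sub_meas x))
    (hg.mul_bdd (hf_sub_meas x₀) (.of_forall fun θ => hfC (x₀ - θ)))
    (hg.aestronglyMeasurable.mul (hf'_meas.comp (measurable_const_sub x₀)).aestronglyMeasurable)
    (.of_forall fun θ x _ => ?_) (hg.norm.mul_const C')
    (.of_forall fun θ x _ => ?_)).2
  · rw [norm_mul]
    exact mul_le_mul_of_nonneg_left (hf'C _) (norm_nonneg _)
  · simpa using ((hf (x - θ)).comp x ((hasDerivAt_id x).sub_const θ)).const_mul (g θ)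

lemma hasDerivAt_integral_phi_mul_phiD {σ s : ℝ} (hσ : 0 < σ) (hs : 0 < s) (l : ℕ) (X : ℝ) :
    HasDerivAt (fun x => ∫ θ, (1 / σ) * phi (θ / σ) * ((1 / s) * phiD l ((x - θ) / s)))
      ((1 / s) * ∫ θ, (1 / σ) * phi (θ / σ) * ((1 / s) * phiD (l + 1) ((X - θ) / s))) X := by
  have hbound (k : ℕ) {c : ℝ} (hc : 0 < c) : ∃ B, ∀ y, |c * phiD k (y / s)| ≤ B := by
    obtain ⟨C, hC⟩ := exists_abs_phiD_le k
    refine ⟨c * C, fun y => ?_⟩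
    rw [abs_mul, abs_of_pos hc]
    exact mul_le_mul_of_nonneg_left (hC _) hc.le
  obtain ⟨C, hC⟩ := hbound l (c := 1 / s) (by positivity)
  obtain ⟨C', hC'⟩ := hbound (l + 1) (c := 1 / s ^ 2) (by positivity)
  have hderiv (y : ℝ) : HasDerivAt (fun y => (1 / s) * phiD l (y / s))
      (1 / s ^ 2 * phiD (l + 1) (y / s)) y :=
    (((hasDerivAt_phiD l (y / s)).comp y ((hasDerivAt_id y).div_const s)).const_mul
      (1 / s)).congr_deriv (by ring)
  convert hasDerivAt_integral_mul_comp_sub ((integrable_phi.comp_div hσ.ne').const_mul (1 / σ))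
    hderiv hC hC' X using 1
  rw [← integral_const_mul]
  congr 1 with θ
  ring

/-- Convolution of the `N(0,σ²)` density with the scaled `l`-th Gaussian derivative. -/
theorem gaussian_deriv_convolution (X s σ : ℝ) (hs : 0 < s) (hσ : 0 < σ) (l : ℕ) :
    ∫ θ : ℝ, (1 / σ) * phi (θ / σ) * ((1 / s) * phiD l ((X - θ) / s)) =
      s ^ l / (Real.sqrt (σ ^ 2 + s ^ 2)) ^ (l + 1) *
        phiD l (X / Real.sqrt (σ ^ 2 + s ^ 2)) := by
  set t := √(σ ^ 2 + s ^ 2)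
  have ht : 0 < t := by positivity
  induction l generalizing X with
  | zero => simpa [phiD] using integral_phi_mul_phi X hσ hs
  | succ l ih =>
    have hlhs := hasDerivAt_integral_phi_mul_phiD hσ hs l X
    rw [funext ih] at hlhs
    have hrhs : HasDerivAt (fun x => s ^ l / t ^ (l + 1) * phiD l (x / t))
        (s ^ l / t ^ (l + 1) * (phiD (l + 1) (X / t) * (1 / t))) X :=
      ((hasDerivAt_phiD l (X / t)).comp X ((hasDerivAt_id X).div_const t)).const_mul _
    have hderiv_eq := hlhs.unique hrhs
    field_simp at hderiv_eq ⊢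
    linear_combination hderiv_eq
end

section
/- Let h_l denote the probabilists' Hermite polynomial of degree l. If X is a real Gaussian random variable with mean μ and variance σ² > 0, then for every natural number l, E[h_l(X)] = μ^l + Σ_{k=1}^{⌊l/2⌋} C(l, 2k) · μ^{l−2k} · (σ² − 1)^k · (2k − 1)!!, where C(l,2k) is the binomial coefficient and (2k−1)!! is the double factorial of 2k−1. -/
open MeasureTheory Real

/-- The probabilists' Hermite polynomial of degree `l`, evaluated at a real `x`. -/
noncomputable def hermiteR (l : ℕ) (x : ℝ) : ℝ := Polynomial.aeval x (Polynomial.hermite l)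

/-!
Gaussian integration by parts gives `E[X P(X)] = μ E[P(X)] + σ² E[P'(X)]` for polynomials `P`.
Together with `h_{n+2} = X h_{n+1} - h_{n+1}'` and `h_{n+1}' = (n + 1) h_n` this yields the
recurrence `m_{n+2} = μ m_{n+1} + (n + 1) (σ² - 1) m_n` for `m_n = E[h_n(X)]`, with `m_0 = 1` and
`m_1 = μ`. By Pascal's rule the formal moments `M_l(μ, σ² - 1)` satisfy the same recurrence.
-/

open Polynomial ProbabilityTheory Finset
open scoped NNReal Nat

namespace Polynomial

theorem derivative_hermite_succ (n : ℕ) :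
    derivative (hermite (n + 1)) = (n + 1) • hermite n := by
  induction n with
  | zero => simp
  | succ n ih =>
    rw [hermite_succ (n + 1), derivative_sub, derivative_mul, derivative_X, one_mul, ih,
      derivative_smul, hermite_succ n]
    simp only [smul_sub, mul_smul_comm, succ_nsmul _ (n + 1)]
    abel

end Polynomial

theorem Nat.choose_add_two_mul_doubleFactorial (n k : ℕ) :
    (n + 2).choose (2 * k + 2) * (2 * k + 1)‼ =
      (n + 1).choose (2 * k + 2) * (2 * k + 1)‼ + (n + 1) * n.choose (2 * k) * (2 * k - 1)‼ := by
  rw [Nat.choose_succ_succ' (n + 1) (2 * k + 1), Nat.add_one_mul_choose_eq,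
    Nat.doubleFactorial_add_one]
  ring

section FormalGaussianMoment

variable {R : Type*} [CommRing R] (μ v : R)

def formalGaussianMomentTerm (l k : ℕ) : R :=
  l.choose (2 * k) * μ ^ (l - 2 * k) * v ^ k * (2 * k - 1)‼

/-- The `l`-th moment of `N(μ, v)` as a polynomial in `μ` and `v`, meaningful also for `v < 0`.
The sum runs over `k ≤ l` rather than `k ≤ l / 2`; the extra terms vanish. -/
def formalGaussianMoment (l : ℕ) : R :=
  ∑ k ∈ range (l + 1), formalGaussianMomentTerm μ v l k

theorem formalGaussianMomentTerm_of_lt {l k : ℕ} (h : l < 2 * k) :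
    formalGaussianMomentTerm μ v l k = 0 := by
  simp [formalGaussianMomentTerm, Nat.choose_eq_zero_of_lt h]

theorem formalGaussianMomentTerm_zero (l : ℕ) : formalGaussianMomentTerm μ v l 0 = μ ^ l := by
  simp [formalGaussianMomentTerm]

theorem formalGaussianMomentTerm_add_two (n k : ℕ) :
    formalGaussianMomentTerm μ v (n + 2) (k + 1) =
      μ * formalGaussianMomentTerm μ v (n + 1) (k + 1) +
        (n + 1) * v * formalGaussianMomentTerm μ v n k := by
  have hpow : ((n + 1).choose (2 * k + 2) : R) * (μ * μ ^ (n + 1 - (2 * k + 2))) =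
      (n + 1).choose (2 * k + 2) * μ ^ (n - 2 * k) := by
    rcases lt_or_ge (n + 1) (2 * k + 2) with h | h
    · simp [Nat.choose_eq_zero_of_lt h]
    · rw [← pow_succ', show n + 1 - (2 * k + 2) + 1 = n - 2 * k by omega]
  have hcoeff := congr(($(Nat.choose_add_two_mul_doubleFactorial n k) : R))
  push_cast at hcoeff
  simp only [formalGaussianMomentTerm, show 2 * (k + 1) = 2 * k + 2 by ring,
    show n + 2 - (2 * k + 2) = n - 2 * k by omega, show 2 * k + 2 - 1 = 2 * k + 1 by omega,
    pow_succ v k]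
  linear_combination (μ ^ (n - 2 * k) * v ^ k * v) * hcoeff -
    (v ^ k * v * (2 * k + 1)‼) * hpow

theorem formalGaussianMoment_zero : formalGaussianMoment μ v 0 = 1 := by
  simp [formalGaussianMoment, formalGaussianMomentTerm]

theorem formalGaussianMoment_one : formalGaussianMoment μ v 1 = μ := by
  simp [formalGaussianMoment, sum_range_succ, formalGaussianMomentTerm_zero,
    formalGaussianMomentTerm_of_lt]

theorem formalGaussianMoment_add_two (n : ℕ) :
    formalGaussianMoment μ v (n + 2) =
      μ * formalGaussianMoment μ v (n + 1) + (n + 1) * v * formalGaussianMoment μ v n := by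
  have hpad (l : ℕ) : formalGaussianMoment μ v l =
      ∑ k ∈ range (l + 2), formalGaussianMomentTerm μ v l k := by
    rw [sum_range_succ, formalGaussianMomentTerm_of_lt _ _ (by omega), add_zero,
      formalGaussianMoment]
  rw [formalGaussianMoment, hpad (n + 1), hpad n, sum_range_succ', sum_range_succ' _ (n + 2)]
  simp only [formalGaussianMomentTerm_add_two, sum_add_distrib, formalGaussianMomentTerm_zero,
    pow_succ', mul_add, mul_sum]
  ring

theorem formalGaussianMoment_eq_add_sum_Icc (l : ℕ) :
    formalGaussianMoment μ v l =
      μ ^ l + ∑ k ∈ Icc 1 (l / 2), l.choose (2 * k) * μ ^ (l - 2 * k) * v ^ k * (2 * k - 1)‼ := by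
  have htrunc : formalGaussianMoment μ v l =
      ∑ k ∈ range (l / 2 + 1), formalGaussianMomentTerm μ v l k := by
    refine (sum_subset (range_subset_range.2 (by omega)) fun k hk hk' => ?_).symm
    simp only [mem_range] at hk hk'
    exact formalGaussianMomentTerm_of_lt _ _ (by omega)
  rw [htrunc, range_eq_Ico, sum_eq_sum_Ico_succ_bot (by omega), Ico_add_one_right_eq_Icc,
    formalGaussianMomentTerm_zero]
  rfl

end FormalGaussianMoment

namespace ProbabilityTheory

variable (μ : ℝ) (v : ℝ≥0)

theorem integrable_eval_gaussianReal (P : ℝ[X]) :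
    Integrable (fun x => P.eval x) (gaussianReal μ v) := by
  simp_rw [eval_eq_sum_range]
  refine integrable_finsetSum _ fun i _ => (integrable_pow_of_mem_interior_integrableExpSet
    (X := fun x => x) (by simp [integrableExpSet_fun_id_gaussianReal]) i).const_mul _

theorem integrable_eval_mul_gaussianPDFReal (P : ℝ[X]) :
    Integrable (fun x => P.eval x * gaussianPDFReal μ v x) := by
  rcases eq_or_ne v 0 with rfl | hv
  · simp
  have h := integrable_eval_gaussianReal μ v P
  rw [gaussianReal_of_var_ne_zero μ hv, integrable_withDensity_iff_integrable_smul'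
    (measurable_gaussianPDF μ v) (ae_of_all _ fun _ => gaussianPDF_lt_top)] at h
  simpa only [toReal_gaussianPDF, smul_eq_mul, mul_comm] using h

theorem hasDerivAt_gaussianPDFReal (x : ℝ) :
    HasDerivAt (gaussianPDFReal μ v) (-(x - μ) / v * gaussianPDFReal μ v x) x := by
  rw [gaussianPDFReal_def]
  refine (((((hasDerivAt_id' x).sub_const μ).pow 2).neg.div_const (2 * (v : ℝ))).exp.const_mul
    _).congr_deriv ?_
  simp only [Pi.neg_apply, Pi.pow_apply]
  push_cast
  ring

noncomputable def gaussianPolyExpectation : ℝ[X] →ₗ[ℝ] ℝ where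
  toFun P := ∫ x, P.eval x ∂gaussianReal μ v
  map_add' P Q := by
    simp only [eval_add]
    exact integral_add (integrable_eval_gaussianReal μ v P) (integrable_eval_gaussianReal μ v Q)
  map_smul' c P := by simp only [eval_smul, smul_eq_mul, integral_const_mul, RingHom.id_apply]

theorem gaussianPolyExpectation_apply (P : ℝ[X]) :
    gaussianPolyExpectation μ v P = ∫ x, P.eval x ∂gaussianReal μ v := rfl

theorem gaussianPolyExpectation_C_mul (a : ℝ) (P : ℝ[X]) :
    gaussianPolyExpectation μ v (C a * P) = a * gaussianPolyExpectation μ v P := by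
  rw [C_mul', map_smul, smul_eq_mul]

theorem gaussianPolyExpectation_one : gaussianPolyExpectation μ v 1 = 1 := by
  simp [gaussianPolyExpectation_apply]

theorem gaussianPolyExpectation_X : gaussianPolyExpectation μ v X = μ := by
  simp [gaussianPolyExpectation_apply, integral_id_gaussianReal]

/-- Gaussian integration by parts (Stein's identity) on polynomials. -/
theorem gaussianPolyExpectation_X_mul (P : ℝ[X]) :
    gaussianPolyExpectation μ v (X * P) =
      μ * gaussianPolyExpectation μ v P + v * gaussianPolyExpectation μ v (derivative P) := by
  rcases eq_or_ne v 0 with rfl | hv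
  · simp [gaussianPolyExpectation_apply]
  have hdensity (Q : ℝ[X]) :
      gaussianPolyExpectation μ v Q = ∫ x, Q.eval x * gaussianPDFReal μ v x := by
    simp only [gaussianPolyExpectation_apply, integral_gaussianReal_eq_integral_smul hv,
      smul_eq_mul, mul_comm]
  set Q := derivative P - C (v : ℝ)⁻¹ * ((X - C μ) * P)
  have hderiv (x : ℝ) : HasDerivAt (fun x => P.eval x * gaussianPDFReal μ v x)
      (Q.eval x * gaussianPDFReal μ v x) x := by
    refine ((P.hasDerivAt x).mul (hasDerivAt_gaussianPDFReal μ v x)).congr_deriv ?_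
    simp only [Q, eval_sub, eval_mul, eval_C, eval_X]
    ring
  have hQ : gaussianPolyExpectation μ v Q = 0 := by
    rw [hdensity]
    exact integral_eq_zero_of_hasDerivAt_of_integrable hderiv
      (integrable_eval_mul_gaussianPDFReal μ v Q) (integrable_eval_mul_gaussianPDFReal μ v P)
  simp only [Q, map_sub, gaussianPolyExpectation_C_mul, sub_mul] at hQ
  have hv' : (v : ℝ) ≠ 0 := mod_cast hv
  field_simp at hQ
  linear_combination -hQ

theorem gaussianPolyExpectation_hermite_add_two (n : ℕ) :
    gaussianPolyExpectation μ v ((hermite (n + 2)).map (algebraMap ℤ ℝ)) =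
      μ * gaussianPolyExpectation μ v ((hermite (n + 1)).map (algebraMap ℤ ℝ)) +
        (n + 1) * (v - 1) * gaussianPolyExpectation μ v ((hermite n).map (algebraMap ℤ ℝ)) := by
  rw [hermite_succ (n + 1), Polynomial.map_sub, Polynomial.map_mul, map_X, ← derivative_map,
    map_sub, gaussianPolyExpectation_X_mul, derivative_map, derivative_hermite_succ,
    nsmul_eq_mul, Polynomial.map_mul, Polynomial.map_natCast, ← C_eq_natCast,
    gaussianPolyExpectation_C_mul]
  push_cast
  ring

theorem integral_aeval_hermite_gaussianReal (l : ℕ) :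
    ∫ x, aeval x (hermite l) ∂gaussianReal μ v = formalGaussianMoment μ ((v : ℝ) - 1) l := by
  simp_rw [← eval_map_algebraMap, ← gaussianPolyExpectation_apply]
  induction l using Nat.twoStepInduction with
  | zero => simp [gaussianPolyExpectation_one, formalGaussianMoment_zero]
  | one => simp [gaussianPolyExpectation_X, formalGaussianMoment_one]
  | more n ih₀ ih₁ =>
    rw [gaussianPolyExpectation_hermite_add_two, ih₀, ih₁, formalGaussianMoment_add_two]

end ProbabilityTheory

/-- Hermite moments of a Gaussian: if `X ~ N(μ, σ²)` then
`E[h_l(X)] = μ^l + Σ_{k=1}^{⌊l/2⌋} C(l,2k) μ^{l−2k} (σ²−1)^k (2k−1)!!`,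
with the expectation written as the integral of `h_l` against the `N(μ,σ²)` density. -/
theorem hermite_moment_gaussian (μ σ : ℝ) (hσ : 0 < σ) (l : ℕ) :
    ∫ x : ℝ, hermiteR l x *
        ((σ * Real.sqrt (2 * Real.pi))⁻¹ * Real.exp (-(x - μ) ^ 2 / (2 * σ ^ 2))) =
      μ ^ l + ∑ k ∈ Finset.Icc 1 (l / 2),
        (l.choose (2 * k) : ℝ) * μ ^ (l - 2 * k) * (σ ^ 2 - 1) ^ k *
          (Nat.doubleFactorial (2 * k - 1) : ℝ) := by
  set v : ℝ≥0 := ⟨σ ^ 2, sq_nonneg σ⟩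
  have hv : v ≠ 0 := by
    rw [ne_eq, ← NNReal.coe_eq_zero]
    exact pow_ne_zero 2 hσ.ne'
  have hdensity (x : ℝ) : (σ * √(2 * π))⁻¹ * exp (-(x - μ) ^ 2 / (2 * σ ^ 2)) =
      gaussianPDFReal μ v x := by
    rw [gaussianPDFReal, show (v : ℝ) = σ ^ 2 from rfl, sqrt_mul' _ (sq_nonneg σ), sqrt_sq hσ.le,
      mul_comm σ]
  simp_rw [hdensity, hermiteR, mul_comm _ (gaussianPDFReal μ v _), ← smul_eq_mul,
    ← integral_gaussianReal_eq_integral_smul hv, integral_aeval_hermite_gaussianReal,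
    formalGaussianMoment_eq_add_sum_Icc]
  rfl
end

section
/- (Mehler's identity.) Let φ denote the standard Gaussian density and φ^{(l)} its l-th derivative. For every ρ with |ρ| < 1 and all real x, y, the bivariate standard Gaussian density with correlation ρ admits the expansion (1 / (2π√(1 − ρ²))) · exp( −(x² − 2ρxy + y²) / (2(1 − ρ²)) ) = φ(x)φ(y) + Σ_{l=1}^∞ (ρ^l / l!) · φ^{(l)}(x) · φ^{(l)}(y), where the series converges. -/
/-!
Let `G z = exp (-z²/2)` (`Mehler.cgauss`), an entire function with `φ = G / √(2π)` on `ℝ`.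
Since `G z` is the complex moment generating function of `S ~ N(0,1)` evaluated at `I z`, its
derivatives have the Fourier representation `G⁽ⁿ⁾(y) = 𝔼[(I S)ⁿ exp (I y S)]`. Expanding
`G (x + I ρ S)` in its Taylor series at `x` and integrating term by term against `exp (I y S)`
therefore gives `∑ ρⁿ/n! G⁽ⁿ⁾(x) G⁽ⁿ⁾(y) = 𝔼[G (x + I ρ S) exp (I y S)]`, a Gaussian integral
equal to `2π` times the bivariate density.

Termwise integration is legitimate because `|G⁽ⁿ⁾(x)| ≤ 𝔼|S|ⁿ` and `(𝔼|S|ⁿ)² ≤ 4e√(n+1) n!`: the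
latter follows from `|s|ⁿ ≤ n! σ⁻ⁿ (e^{σs} + e^{-σs})` with `σ² = n + 1` and Stirling's bound
`n! eⁿ ≤ e √n nⁿ`. Hence the `n`-th term is `O(√(n+1) |ρ|ⁿ)`, which is summable for `|ρ| < 1`.
-/

open MeasureTheory Real

open Complex ProbabilityTheory
open scoped Nat NNReal

lemma ofReal_cpow_one_half {r : ℝ} (hr : 0 ≤ r) : (r : ℂ) ^ (1 / 2 : ℂ) = √r := by
  rw [Real.sqrt_eq_rpow, ofReal_cpow hr]
  norm_num

lemma ofReal_iteratedDeriv_of_differentiable {f : ℂ → ℂ} (hf : Differentiable ℂ f) {g : ℝ → ℝ}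
    (hfg : ∀ t : ℝ, f t = g t) (n : ℕ) (t : ℝ) :
    ((iteratedDeriv n g t : ℝ) : ℂ) = iteratedDeriv n f t := by
  induction n generalizing t with
  | zero => simp [hfg]
  | succ n ih =>
    have hD : HasDerivAt (iteratedDeriv n f) (iteratedDeriv (n + 1) f t) t := by
      rw [iteratedDeriv_succ]
      exact ((hf.contDiff.differentiable_iteratedDeriv' n) _).hasDerivAt
    have hre : HasDerivAt (iteratedDeriv n g) (iteratedDeriv (n + 1) f t).re t := by
      simpa [← ih] using hD.real_of_complex
    have hD' := hD.comp_ofReal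
    simp only [← ih] at hD'
    rw [iteratedDeriv_succ, hre.deriv]
    exact hre.ofReal_comp.unique hD'

lemma factorial_mul_exp_le {n : ℕ} (hn : n ≠ 0) : n ! * rexp n ≤ rexp 1 * √n * n ^ n := by
  obtain ⟨m, rfl⟩ := Nat.exists_eq_succ_of_ne_zero hn
  have hS : Stirling.stirlingSeq (m + 1) ≤ rexp 1 / √2 := by
    simpa [Stirling.stirlingSeq_one] using Stirling.stirlingSeq'_antitone (Nat.zero_le m)
  have he : rexp (m + 1 : ℕ) = rexp 1 ^ (m + 1) := by rw [← Real.exp_nat_mul, mul_one]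
  calc ((m + 1) ! : ℝ) * rexp (m + 1 : ℕ)
      = Stirling.stirlingSeq (m + 1) * √2 * (√(m + 1 : ℕ) * (m + 1 : ℕ) ^ (m + 1)) := by
        rw [Stirling.stirlingSeq, Real.sqrt_mul zero_le_two, div_pow, he]
        field_simp
    _ ≤ rexp 1 / √2 * √2 * (√(m + 1 : ℕ) * (m + 1 : ℕ) ^ (m + 1)) := by gcongr
    _ = rexp 1 * √(m + 1 : ℕ) * (m + 1 : ℕ) ^ (m + 1) := by field_simp

lemma abs_pow_le_factorial_div_pow_mul {σ : ℝ} (hσ : 0 < σ) (n : ℕ) (s : ℝ) :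
    |s| ^ n ≤ n ! / σ ^ n * (rexp (σ * s) + rexp (-σ * s)) := by
  have hexp : rexp (σ * |s|) ≤ rexp (σ * s) + rexp (-σ * s) := by
    rcases abs_cases s with ⟨h, -⟩ | ⟨h, -⟩
    · rw [h]; linarith [Real.exp_pos (-σ * s)]
    · rw [h, mul_neg, ← neg_mul]; linarith [Real.exp_pos (σ * s)]
  have h := Real.pow_div_factorial_le_exp _ (mul_nonneg hσ.le (abs_nonneg s)) n
  rw [mul_pow, div_le_iff₀ (by positivity)] at h
  rw [div_mul_eq_mul_div, le_div_iff₀ (by positivity)]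
  calc |s| ^ n * σ ^ n ≤ rexp (σ * |s|) * n ! := by linarith
    _ ≤ n ! * (rexp (σ * s) + rexp (-σ * s)) := by rw [mul_comm]; gcongr

lemma integrable_abs_pow_gaussianReal (μ : ℝ) (v : ℝ≥0) (n : ℕ) :
    Integrable (fun s => |s| ^ n) (gaussianReal μ v) :=
  (memLp_id_gaussianReal n).integrable_norm_pow'

lemma integral_abs_pow_gaussianReal_le (n : ℕ) {σ : ℝ} (hσ : 0 < σ) :
    ∫ s, |s| ^ n ∂gaussianReal 0 1 ≤ 2 * n ! * rexp (σ ^ 2 / 2) / σ ^ n := by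
  have hint (t : ℝ) := integrable_exp_mul_gaussianReal (μ := 0) (v := 1) t
  calc ∫ s, |s| ^ n ∂gaussianReal 0 1
      ≤ ∫ s, n ! / σ ^ n * (rexp (σ * s) + rexp (-σ * s)) ∂gaussianReal 0 1 :=
        integral_mono (integrable_abs_pow_gaussianReal 0 1 n)
          (((hint σ).add (hint (-σ))).const_mul _) (abs_pow_le_factorial_div_pow_mul hσ n)
    _ = n ! / σ ^ n * (mgf id (gaussianReal 0 1) σ + mgf id (gaussianReal 0 1) (-σ)) := by
        rw [integral_const_mul, integral_add (hint σ) (hint (-σ))]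
        rfl
    _ = 2 * n ! * rexp (σ ^ 2 / 2) / σ ^ n := by
        simp only [mgf_id_gaussianReal]
        push_cast
        ring_nf

lemma sq_integral_abs_pow_gaussianReal_le (n : ℕ) :
    (∫ s, |s| ^ n ∂gaussianReal 0 1) ^ 2 ≤ 4 * rexp 1 * √(n + 1) * n ! := by
  have hσ : (0 : ℝ) < √(n + 1) := by positivity
  have hσ2 : √(n + 1) ^ 2 = (n + 1 : ℝ) := Real.sq_sqrt (by positivity)
  have hm := integral_abs_pow_gaussianReal_le n hσ
  have hm0 : 0 ≤ ∫ s, |s| ^ n ∂gaussianReal 0 1 := integral_nonneg fun s => by positivity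
  have hS : n ! * rexp (n + 1) ≤ rexp 1 * √(n + 1) * (n + 1) ^ n := by
    have h := factorial_mul_exp_le (Nat.succ_ne_zero n)
    push_cast [Nat.factorial_succ, pow_succ] at h
    have hn : (0 : ℝ) < n + 1 := by positivity
    nlinarith
  calc (∫ s, |s| ^ n ∂gaussianReal 0 1) ^ 2
      ≤ (2 * n ! * rexp (√(n + 1) ^ 2 / 2) / √(n + 1) ^ n) ^ 2 := pow_le_pow_left₀ hm0 hm 2
    _ = 4 * n ! * (n ! * rexp (n + 1) / (n + 1) ^ n) := by
        rw [div_pow, mul_pow, mul_pow, ← Real.exp_nat_mul, ← pow_mul, mul_comm n 2, pow_mul, hσ2]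
        push_cast
        ring_nf
    _ ≤ 4 * n ! * (rexp 1 * √(n + 1)) := by
        gcongr
        rw [div_le_iff₀ (by positivity)]
        exact hS
    _ = 4 * rexp 1 * √(n + 1) * n ! := by ring

lemma norm_I_mul_pow_mul_cexp (n : ℕ) (y s : ℝ) :
    ‖(I * s) ^ n * cexp (I * y * s)‖ = |s| ^ n := by
  rw [norm_mul, norm_pow, norm_mul, norm_I, one_mul, norm_real, Real.norm_eq_abs,
    show I * y * s = ((y * s : ℝ) : ℂ) * I by push_cast; ring, norm_exp_ofReal_mul_I, mul_one]

lemma integrable_I_mul_pow_mul_cexp (n : ℕ) (y : ℝ) :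
    Integrable (fun s : ℝ => (I * s) ^ n * cexp (I * y * s)) (gaussianReal 0 1) :=
  (integrable_abs_pow_gaussianReal 0 1 n).mono' (by fun_prop)
    (ae_of_all _ fun s => (norm_I_mul_pow_mul_cexp n y s).le)

namespace Mehler

noncomputable def cgauss (z : ℂ) : ℂ := cexp (-z ^ 2 / 2)

lemma differentiable_cgauss : Differentiable ℂ cgauss := by
  unfold cgauss
  fun_prop

lemma ofReal_phiD (n : ℕ) (t : ℝ) :
    (phiD n t : ℂ) = iteratedDeriv n cgauss t / √(2 * π) := by
  have h := ofReal_iteratedDeriv_of_differentiable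
    (differentiable_cgauss.const_mul ((√(2 * π) : ℂ)⁻¹)) (g := phi) (fun t => by simp [phi, cgauss])
    n t
  rw [phiD, h, iteratedDeriv_const_mul_field, div_eq_inv_mul]

lemma iteratedDeriv_cgauss (n : ℕ) (z : ℂ) :
    iteratedDeriv n cgauss z = ∫ s, (I * s) ^ n * cexp (I * z * s) ∂gaussianReal 0 1 := by
  have hmgf : complexMGF id (gaussianReal 0 1) = fun w => cexp (w ^ 2 / 2) := by
    funext w
    simp [complexMGF_id_gaussianReal]
  have hG : cgauss = fun z => complexMGF id (gaussianReal 0 1) (I * z) := by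
    funext z
    simp only [hmgf, cgauss, mul_pow, I_sq]
    ring_nf
  rw [hG, iteratedDeriv_comp_const_mul (by rw [hmgf]; fun_prop) I]
  beta_reduce
  rw [iteratedDeriv_complexMGF (by simp [integrableExpSet_id_gaussianReal]),
    ← integral_const_mul]
  congr with s
  simp only [id, mul_pow]
  ring

lemma norm_iteratedDeriv_cgauss_le (n : ℕ) (x : ℝ) :
    ‖iteratedDeriv n cgauss x‖ ≤ ∫ s, |s| ^ n ∂gaussianReal 0 1 := by
  rw [iteratedDeriv_cgauss]
  refine (norm_integral_le_integral_norm _).trans_eq ?_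
  congr with s
  exact norm_I_mul_pow_mul_cexp n x s

noncomputable def mehlerTerm (ρ x y : ℝ) (n : ℕ) (s : ℝ) : ℂ :=
  ((ρ : ℂ) ^ n / n ! * iteratedDeriv n cgauss x) * ((I * s) ^ n * cexp (I * y * s))

lemma hasSum_mehlerTerm (ρ x y s : ℝ) :
    HasSum (fun n => mehlerTerm ρ x y n s) (cgauss (x + I * ρ * s) * cexp (I * y * s)) := by
  have h := (hasSum_taylorSeries_of_entire differentiable_cgauss (x : ℂ) (x + I * ρ * s)).mul_right
    (cexp (I * y * s))
  refine (funext fun n => ?_ : (fun n => mehlerTerm ρ x y n s) = _) ▸ h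
  simp only [mehlerTerm, add_sub_cancel_left, smul_eq_mul, mul_pow]
  ring

lemma integral_mehlerTerm (ρ x y : ℝ) (n : ℕ) :
    ∫ s, mehlerTerm ρ x y n s ∂gaussianReal 0 1 =
      (ρ : ℂ) ^ n / n ! * iteratedDeriv n cgauss x * iteratedDeriv n cgauss y := by
  rw [iteratedDeriv_cgauss n y, ← integral_const_mul]
  rfl

lemma integral_norm_mehlerTerm_le (ρ x y : ℝ) (n : ℕ) :
    ∫ s, ‖mehlerTerm ρ x y n s‖ ∂gaussianReal 0 1 ≤ 4 * rexp 1 * (√(n + 1) * |ρ| ^ n) := by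
  set m := ∫ s, |s| ^ n ∂gaussianReal 0 1
  have hnorm (s : ℝ) :
      ‖mehlerTerm ρ x y n s‖ = |ρ| ^ n / n ! * ‖iteratedDeriv n cgauss x‖ * |s| ^ n := by
    rw [mehlerTerm, norm_mul, norm_I_mul_pow_mul_cexp]
    simp
  simp_rw [hnorm]
  rw [integral_const_mul]
  calc |ρ| ^ n / n ! * ‖iteratedDeriv n cgauss x‖ * m ≤ |ρ| ^ n / n ! * m * m := by
        gcongr
        exact norm_iteratedDeriv_cgauss_le n x
    _ = |ρ| ^ n / n ! * m ^ 2 := by ring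
    _ ≤ |ρ| ^ n / n ! * (4 * rexp 1 * √(n + 1) * n !) := by
        gcongr
        exact sq_integral_abs_pow_gaussianReal_le n
    _ = 4 * rexp 1 * (√(n + 1) * |ρ| ^ n) := by field_simp

lemma summable_integral_norm_mehlerTerm {ρ : ℝ} (hρ : |ρ| < 1) (x y : ℝ) :
    Summable fun n => ∫ s, ‖mehlerTerm ρ x y n s‖ ∂gaussianReal 0 1 := by
  have hgeom : Summable fun n : ℕ => ((n : ℝ) + 1) * |ρ| ^ n := by
    have h1 := summable_pow_mul_geometric_of_norm_lt_one 1 (r := |ρ|) (by simpa using hρ)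
    simp only [pow_one] at h1
    simpa [add_mul] using h1.add (summable_geometric_of_lt_one (abs_nonneg ρ) hρ)
  refine Summable.of_nonneg_of_le (fun n => integral_nonneg fun s => norm_nonneg _)
    (integral_norm_mehlerTerm_le ρ x y)
    ((hgeom.of_nonneg_of_le (fun n => by positivity) fun n => ?_).mul_left _)
  gcongr
  simp

lemma integral_cgauss_mul_cexp {ρ : ℝ} (hρ : |ρ| < 1) (x y : ℝ) :
    ∫ s, cgauss (x + I * ρ * s) * cexp (I * y * s) ∂gaussianReal 0 1 =
      ((√(1 - ρ ^ 2))⁻¹ * rexp (-(x ^ 2 - 2 * ρ * x * y + y ^ 2) / (2 * (1 - ρ ^ 2))) : ℝ) := by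
  have hρ2 : 0 < 1 - ρ ^ 2 := by nlinarith [abs_nonneg ρ, sq_abs ρ]
  have hρ2' : (1 - (ρ : ℂ) ^ 2) ≠ 0 := by exact_mod_cast hρ2.ne'
  have hb : ((-(1 - ρ ^ 2) / 2 : ℝ) : ℂ).re < 0 := by rw [ofReal_re]; linarith
  have hquad (s : ℝ) : gaussianPDFReal 0 1 s • (cgauss (x + I * ρ * s) * cexp (I * y * s)) =
      ((√(2 * π))⁻¹ : ℝ) * cexp (((-(1 - ρ ^ 2) / 2 : ℝ) : ℂ) * s ^ 2 + I * (y - ρ * x) * s +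
        ((-x ^ 2 / 2 : ℝ) : ℂ)) := by
    simp only [gaussianPDFReal, cgauss, Complex.real_smul, NNReal.coe_one, mul_one, sub_zero]
    push_cast
    rw [mul_assoc, ← Complex.exp_add, ← Complex.exp_add]
    congr 2
    linear_combination (-(ρ : ℂ) ^ 2 * s ^ 2 / 2) * I_sq
  have hpi : (π : ℂ) / -((-(1 - ρ ^ 2) / 2 : ℝ) : ℂ) = ((2 * π / (1 - ρ ^ 2) : ℝ) : ℂ) := by
    push_cast
    field_simp
  have hexp : ((-x ^ 2 / 2 : ℝ) : ℂ) - (I * (y - ρ * x)) ^ 2 / (4 * ((-(1 - ρ ^ 2) / 2 : ℝ) : ℂ)) =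
      ((-(x ^ 2 - 2 * ρ * x * y + y ^ 2) / (2 * (1 - ρ ^ 2)) : ℝ) : ℂ) := by
    rw [mul_pow, I_sq]
    push_cast
    field_simp
    ring
  have hsqrt : (√(2 * π))⁻¹ * √(2 * π / (1 - ρ ^ 2)) = (√(1 - ρ ^ 2))⁻¹ := by
    rw [Real.sqrt_div (by positivity)]
    field_simp
  rw [integral_gaussianReal_eq_integral_smul one_ne_zero]
  simp_rw [hquad]
  rw [integral_const_mul, integral_cexp_quadratic hb, hpi, hexp, ofReal_cpow_one_half (by positivity),
    ← ofReal_exp, ← mul_assoc, ← ofReal_mul, hsqrt, ofReal_mul]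

lemma hasSum_mul_iteratedDeriv_cgauss {ρ : ℝ} (hρ : |ρ| < 1) (x y : ℝ) :
    HasSum (fun n => (ρ : ℂ) ^ n / n ! * iteratedDeriv n cgauss x * iteratedDeriv n cgauss y)
      ((√(1 - ρ ^ 2))⁻¹ * rexp (-(x ^ 2 - 2 * ρ * x * y + y ^ 2) / (2 * (1 - ρ ^ 2))) : ℝ) := by
  have h := hasSum_integral_of_summable_integral_norm (F := mehlerTerm ρ x y)
    (fun n => (integrable_I_mul_pow_mul_cexp n y).const_mul _)
    (summable_integral_norm_mehlerTerm hρ x y)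
  simpa only [integral_mehlerTerm, fun s => (hasSum_mehlerTerm ρ x y s).tsum_eq,
    integral_cgauss_mul_cexp hρ] using h

lemma hasSum_mehler {ρ : ℝ} (hρ : |ρ| < 1) (x y : ℝ) :
    HasSum (fun n => ρ ^ n / n ! * phiD n x * phiD n y)
      ((2 * π * √(1 - ρ ^ 2))⁻¹ * rexp (-(x ^ 2 - 2 * ρ * x * y + y ^ 2) / (2 * (1 - ρ ^ 2)))) := by
  rw [← Complex.hasSum_ofReal]
  have h2π : ((√(2 * π) : ℝ) : ℂ) ^ 2 = 2 * π := by
    rw [← ofReal_pow, Real.sq_sqrt (by positivity)]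
    push_cast
    ring
  have hterm (n : ℕ) : ((ρ ^ n / n ! * phiD n x * phiD n y : ℝ) : ℂ) =
      (ρ : ℂ) ^ n / n ! * iteratedDeriv n cgauss x * iteratedDeriv n cgauss y / (2 * π) := by
    push_cast
    rw [ofReal_phiD, ofReal_phiD, ← h2π]
    ring
  have hsum : (((2 * π * √(1 - ρ ^ 2))⁻¹ *
      rexp (-(x ^ 2 - 2 * ρ * x * y + y ^ 2) / (2 * (1 - ρ ^ 2))) : ℝ) : ℂ) =
      ((√(1 - ρ ^ 2))⁻¹ * rexp (-(x ^ 2 - 2 * ρ * x * y + y ^ 2) / (2 * (1 - ρ ^ 2))) : ℝ) /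
        (2 * π) := by
    push_cast
    ring
  simp_rw [hterm, hsum]
  exact (hasSum_mul_iteratedDeriv_cgauss hρ x y).div_const _

end Mehler

/-- Mehler's identity: for `|ρ| < 1`, the bivariate standard Gaussian density with
correlation `ρ` admits the convergent expansion
`(2π√(1−ρ²))⁻¹ exp(−(x²−2ρxy+y²)/(2(1−ρ²))) = φ(x)φ(y) + Σ_{l=1}^∞ (ρ^l/l!) φ^{(l)}(x) φ^{(l)}(y)`,
stated here as: the series over `l ≥ 1` has sum equal to the density minus `φ(x)φ(y)`. -/
theorem mehler_identity (ρ : ℝ) (hρ : |ρ| < 1) (x y : ℝ) :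
    HasSum
      (fun l : ℕ =>
        ρ ^ (l + 1) / (Nat.factorial (l + 1) : ℝ) * phiD (l + 1) x * phiD (l + 1) y)
      ((2 * Real.pi * Real.sqrt (1 - ρ ^ 2))⁻¹ *
          Real.exp (-(x ^ 2 - 2 * ρ * x * y + y ^ 2) / (2 * (1 - ρ ^ 2))) -
        phi x * phi y) := by
  simpa [phiD] using (hasSum_nat_add_iff' 1).mpr (Mehler.hasSum_mehler hρ x y)
end
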